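/- In a bicartesian category with zero object hypotheses replaced by fst = snd : O × O → O and inl = inr : I → I + I, if f, g : A → B and either A is isomorphic to O or I, or B is isomorphic to O or I, then f = g. -/

import Mathlib

open CategoryTheory CategoryTheory.Limits

universe v u

section

variable {C : Type u} [Category.{v} C]

theorem subsingleton_hom_of_prod_fst_eq_snd {X : C} [HasBinaryProduct X X]
    (h : (prod.fst : X ⨯ X ⟶ X) = prod.snd) (Y : C) : Subsingleton (Y ⟶ X) :=
  ⟨fun f g => by
    simpa only [prod.lift_fst, prod.lift_snd] using prod.lift f g ≫= h⟩

theorem subsingleton_hom_of_coprod_inl_eq_inr {X : C} [HasBinaryCoproduct X X]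
    (h : (coprod.inl : X ⟶ X ⨿ X) = coprod.inr) (Y : C) : Subsingleton (X ⟶ Y) :=
  ⟨fun f g => by
    simpa only [coprod.inl_desc, coprod.inr_desc] using h =≫ coprod.desc f g⟩

end

/-- In a dicartesian category (binary products and coproducts, terminal object `I`,
initial object `O`, with `fst = snd : O ⨯ O ⟶ O` and `inl = inr : I ⟶ I ⨿ I`), if the
domain or the codomain of two parallel morphisms is isomorphic to `O` or to `I`, then
the morphisms are equal. -/
theorem stmt10 (C : Type u) [Category.{v} C] [HasBinaryProducts C] [HasBinaryCoproducts C]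
    [HasTerminal C] [HasInitial C]
    (hp : (prod.fst : (⊥_ C) ⨯ (⊥_ C) ⟶ ⊥_ C) = prod.snd)
    (hc : (coprod.inl : ⊤_ C ⟶ (⊤_ C) ⨿ (⊤_ C)) = coprod.inr)
    {A B : C} (f g : A ⟶ B)
    (hiso : Nonempty (A ≅ ⊥_ C) ∨ Nonempty (A ≅ ⊤_ C) ∨
            Nonempty (B ≅ ⊥_ C) ∨ Nonempty (B ≅ ⊤_ C)) :
    f = g := by
  rcases hiso with ⟨⟨e⟩⟩ | ⟨⟨e⟩⟩ | ⟨⟨e⟩⟩ | ⟨⟨e⟩⟩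
  · exact (e.homCongr (Iso.refl B)).subsingleton.elim f g
  · have := subsingleton_hom_of_coprod_inl_eq_inr hc B
    exact (e.homCongr (Iso.refl B)).subsingleton.elim f g
  · have := subsingleton_hom_of_prod_fst_eq_snd hp A
    exact ((Iso.refl A).homCongr e).subsingleton.elim f g
  · exact ((Iso.refl A).homCongr e).subsingleton.elim f g
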